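/- arXiv:1405.5842 — 2 statements merged into one kernel-verified Lean document; each statement's English description precedes it below -/
import Mathlib

section
/- Let δ₁, δ₂ > 0 and let g₁₁, g₁₂, g₂₁, g₂₂ : [0,∞) → [0,1] be decreasing functions with g_{ij}(0) = 1 and 1 - g_{ij}(x) ≤ μ_{ij}·x for constants μ_{ij} ≥ 0. Fix v₁, v₂ ≥ 0 and define recursively l₁(t) = v₂ e^{-δ₂ t}, l₂(t) = v₁ e^{-δ₁ t}, and for k ≥ 1: l_{2k+1}(t) = v₂ e^{-δ₂ t} + e^{-δ₂ t} ∫₀ᵗ e^{δ₂ s}[(1 - g₁₂(l_{2k}(s))) + (1 - g₂₂(l_{2k-1}(s)))] ds, and l_{2k+2}(t) = v₁ e^{-δ₁ t} + e^{-δ₁ t} ∫₀ᵗ e^{δ₁ s}[(1 - g₁₁(l_{2k}(s))) + (1 - g₂₁(l_{2k-1}(s)))] ds. Then for every t ≥ 0 and every k ≥ 1, l_{2k+1}(t) ≥ l_{2k-1}(t) and l_{2k+2}(t) ≥ l_{2k}(t). -/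
/-!
Each iterate is the Duhamel solution of `y' = -δ y + G` with a forcing term
`G = (1 - g (l_{2k})) + (1 - g (l_{2k-1}))`, which is nonnegative and, since the `g`'s are
decreasing, monotone in the two previous iterates. Hence `l₁ ≤ l₃`, `l₂ ≤ l₄` (zero forcing versus
nonnegative forcing), and each order relation between consecutive pairs propagates to the next
pair. Continuity and nonnegativity of the iterates are carried along the induction: they make the
forcing integrable, without which the interval integrals would be the junk value `0`.
-/

open MeasureTheory Set Real

/-- The solution of `y' = -δ y + G`, `y 0 = v`. -/
noncomputable def duhamel (δ v : ℝ) (G : ℝ → ℝ) (t : ℝ) : ℝ :=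
  v * exp (-δ * t) + exp (-δ * t) * ∫ s in (0:ℝ)..t, exp (δ * s) * G s

def forcing (gA gB f h : ℝ → ℝ) (s : ℝ) : ℝ := (1 - gA (f s)) + (1 - gB (h s))

def IsAntitoneUnitValued (g : ℝ → ℝ) : Prop := Antitone g ∧ MapsTo g (Ici 0) (Icc 0 1)

def NonnegContinuousOnIci (f : ℝ → ℝ) : Prop := ContinuousOn f (Ici 0) ∧ ∀ t ≥ 0, 0 ≤ f t

lemma continuousOn_Ici_of_forall_continuousOn_Icc {f : ℝ → ℝ} {a : ℝ}
    (hf : ∀ b ≥ a, ContinuousOn f (Icc a b)) : ContinuousOn f (Ici a) := by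
  refine continuousOn_of_locally_continuousOn fun x hx => ⟨Iio (x + 1), isOpen_Iio, by simp, ?_⟩
  exact (hf (x + 1) (by linarith [mem_Ici.1 hx])).mono fun y ⟨hy, hy'⟩ => ⟨hy, hy'.le⟩

section Duhamel

variable {δ v : ℝ} {G G' : ℝ → ℝ}

@[simp] lemma duhamel_zero (δ v t : ℝ) : duhamel δ v 0 t = v * exp (-δ * t) := by
  simp [duhamel]

lemma intervalIntegrable_exp_mul {t : ℝ} (ht : 0 ≤ t) (hG : IntegrableOn G (Icc 0 t)) :
    IntervalIntegrable (fun s => exp (δ * s) * G s) volume 0 t := by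
  rw [intervalIntegrable_iff_integrableOn_Icc_of_le ht]
  exact hG.continuousOn_mul (by fun_prop) isCompact_Icc

lemma continuousOn_duhamel (hG : ∀ T, IntegrableOn G (Icc 0 T)) :
    ContinuousOn (duhamel δ v G) (Ici 0) := by
  have hprim : ContinuousOn (fun t => ∫ s in (0:ℝ)..t, exp (δ * s) * G s) (Ici 0) := by
    refine continuousOn_Ici_of_forall_continuousOn_Icc fun T hT => ?_
    rw [← uIcc_of_le hT]
    exact intervalIntegral.continuousOn_primitive_interval
      (by rw [uIcc_of_le hT]; exact (hG T).continuousOn_mul (by fun_prop) isCompact_Icc)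
  unfold duhamel
  fun_prop

lemma duhamel_mono {t : ℝ} (ht : 0 ≤ t) (hG : IntegrableOn G (Icc 0 t))
    (hG' : IntegrableOn G' (Icc 0 t)) (hle : ∀ s ∈ Icc 0 t, G s ≤ G' s) :
    duhamel δ v G t ≤ duhamel δ v G' t := by
  unfold duhamel
  gcongr
  exact intervalIntegral.integral_mono_on ht (intervalIntegrable_exp_mul ht hG)
    (intervalIntegrable_exp_mul ht hG') fun s hs => by gcongr; exact hle s hs

end Duhamel

section Forcing

variable {gA gB f h f' h' : ℝ → ℝ}

lemma integrableOn_comp_of_mapsTo_Icc {g : ℝ → ℝ} (hg : Measurable g)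
    (hg1 : MapsTo g (Ici 0) (Icc 0 1)) (hf : NonnegContinuousOnIci f) (T : ℝ) :
    IntegrableOn (fun s => g (f s)) (Icc 0 T) := by
  refine IntegrableOn.of_bound measure_Icc_lt_top ?_ 1 ?_
  · exact (hg.comp_aemeasurable
      ((hf.1.mono Icc_subset_Ici_self).aemeasurable measurableSet_Icc)).aestronglyMeasurable
  · filter_upwards [ae_restrict_mem measurableSet_Icc] with s hs
    obtain ⟨h0, h1⟩ := hg1 (hf.2 s hs.1)
    rwa [Real.norm_of_nonneg h0]

lemma integrableOn_forcing (hA : IsAntitoneUnitValued gA) (hB : IsAntitoneUnitValued gB)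
    (hf : NonnegContinuousOnIci f) (hh : NonnegContinuousOnIci h) (T : ℝ) :
    IntegrableOn (forcing gA gB f h) (Icc 0 T) :=
  ((integrableOn_const measure_Icc_lt_top.ne).sub
    (integrableOn_comp_of_mapsTo_Icc hA.1.measurable hA.2 hf T)).add
    ((integrableOn_const measure_Icc_lt_top.ne).sub
    (integrableOn_comp_of_mapsTo_Icc hB.1.measurable hB.2 hh T))

lemma forcing_nonneg (hA1 : MapsTo gA (Ici 0) (Icc 0 1)) (hB1 : MapsTo gB (Ici 0) (Icc 0 1))
    {s : ℝ} (hf : 0 ≤ f s) (hh : 0 ≤ h s) : 0 ≤ forcing gA gB f h s := by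
  have := (hA1 hf).2
  have := (hB1 hh).2
  unfold forcing
  linarith

lemma forcing_mono (hA : Antitone gA) (hB : Antitone gB) {s : ℝ} (hf : f s ≤ f' s)
    (hh : h s ≤ h' s) : forcing gA gB f h s ≤ forcing gA gB f' h' s := by
  have := hA hf
  have := hB hh
  unfold forcing
  linarith

end Forcing

section Iteration

variable {δ v : ℝ} {gA gB f h f' h' : ℝ → ℝ}

lemma NonnegContinuousOnIci.of_le {g : ℝ → ℝ} (hf : NonnegContinuousOnIci f)
    (hg : ContinuousOn g (Ici 0)) (hfg : ∀ t ≥ 0, f t ≤ g t) : NonnegContinuousOnIci g :=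
  ⟨hg, fun t ht => (hf.2 t ht).trans (hfg t ht)⟩

lemma nonnegContinuousOnIci_duhamel_zero (hv : 0 ≤ v) : NonnegContinuousOnIci (duhamel δ v 0) :=
  ⟨continuousOn_duhamel fun _ => integrableOn_zero, fun t _ => by rw [duhamel_zero]; positivity⟩

lemma continuousOn_duhamel_forcing (hA : IsAntitoneUnitValued gA) (hB : IsAntitoneUnitValued gB)
    (hf : NonnegContinuousOnIci f) (hh : NonnegContinuousOnIci h) :
    ContinuousOn (duhamel δ v (forcing gA gB f h)) (Ici 0) :=
  continuousOn_duhamel (integrableOn_forcing hA hB hf hh)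

lemma duhamel_zero_le_duhamel_forcing (hA : IsAntitoneUnitValued gA)
    (hB : IsAntitoneUnitValued gB) (hf : NonnegContinuousOnIci f) (hh : NonnegContinuousOnIci h)
    {t : ℝ} (ht : 0 ≤ t) : duhamel δ v 0 t ≤ duhamel δ v (forcing gA gB f h) t :=
  duhamel_mono ht integrableOn_zero (integrableOn_forcing hA hB hf hh t)
    fun s hs => forcing_nonneg hA.2 hB.2 (hf.2 s hs.1) (hh.2 s hs.1)

lemma duhamel_forcing_mono (hA : IsAntitoneUnitValued gA) (hB : IsAntitoneUnitValued gB)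
    (hf : NonnegContinuousOnIci f) (hh : NonnegContinuousOnIci h)
    (hf' : NonnegContinuousOnIci f') (hh' : NonnegContinuousOnIci h')
    (hff' : ∀ s ≥ 0, f s ≤ f' s) (hhh' : ∀ s ≥ 0, h s ≤ h' s) {t : ℝ} (ht : 0 ≤ t) :
    duhamel δ v (forcing gA gB f h) t ≤ duhamel δ v (forcing gA gB f' h') t :=
  duhamel_mono ht (integrableOn_forcing hA hB hf hh t) (integrableOn_forcing hA hB hf' hh' t)
    fun s hs => forcing_mono hA.1 hB.1 (hff' s hs.1) (hhh' s hs.1)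

end Iteration

theorem duhamel_iteration_le_succ {δ₁ δ₂ v₁ v₂ : ℝ} {g₁₁ g₁₂ g₂₁ g₂₂ : ℝ → ℝ}
    (hv₁ : 0 ≤ v₁) (hv₂ : 0 ≤ v₂)
    (h₁₁ : IsAntitoneUnitValued g₁₁) (h₁₂ : IsAntitoneUnitValued g₁₂)
    (h₂₁ : IsAntitoneUnitValued g₂₁) (h₂₂ : IsAntitoneUnitValued g₂₂)
    {a b : ℕ → ℝ → ℝ} (ha0 : a 0 = duhamel δ₂ v₂ 0) (hb0 : b 0 = duhamel δ₁ v₁ 0)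
    (ha : ∀ n, a (n + 1) = duhamel δ₂ v₂ (forcing g₁₂ g₂₂ (b n) (a n)))
    (hb : ∀ n, b (n + 1) = duhamel δ₁ v₁ (forcing g₁₁ g₂₁ (b n) (a n))) (n : ℕ) :
    NonnegContinuousOnIci (a n) ∧ NonnegContinuousOnIci (b n) ∧
      ∀ t ≥ 0, a n t ≤ a (n + 1) t ∧ b n t ≤ b (n + 1) t := by
  induction n with
  | zero =>
    have hA := nonnegContinuousOnIci_duhamel_zero (δ := δ₂) hv₂
    have hB := nonnegContinuousOnIci_duhamel_zero (δ := δ₁) hv₁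
    rw [ha 0, hb 0, ha0, hb0]
    exact ⟨hA, hB, fun t ht => ⟨duhamel_zero_le_duhamel_forcing h₁₂ h₂₂ hB hA ht,
      duhamel_zero_le_duhamel_forcing h₁₁ h₂₁ hB hA ht⟩⟩
  | succ n ih =>
    obtain ⟨hA, hB, hmono⟩ := ih
    have hA' : NonnegContinuousOnIci (a (n + 1)) :=
      hA.of_le (by rw [ha n]; exact continuousOn_duhamel_forcing h₁₂ h₂₂ hB hA)
        fun t ht => (hmono t ht).1
    have hB' : NonnegContinuousOnIci (b (n + 1)) :=
      hB.of_le (by rw [hb n]; exact continuousOn_duhamel_forcing h₁₁ h₂₁ hB hA)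
        fun t ht => (hmono t ht).2
    have hb_mono : ∀ s ≥ 0, b n s ≤ b (n + 1) s := fun s hs => (hmono s hs).2
    have ha_mono : ∀ s ≥ 0, a n s ≤ a (n + 1) s := fun s hs => (hmono s hs).1
    refine ⟨hA', hB', fun t ht => ⟨?_, ?_⟩⟩
    · rw [ha (n + 1)]
      conv_lhs => rw [ha n]
      exact duhamel_forcing_mono h₁₂ h₂₂ hB hA hB' hA' hb_mono ha_mono ht
    · rw [hb (n + 1)]
      conv_lhs => rw [hb n]
      exact duhamel_forcing_mono h₁₁ h₂₁ hB hA hB' hA' hb_mono ha_mono ht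

theorem stmt8_general (δ₁ δ₂ : ℝ)
    (g₁₁ g₁₂ g₂₁ g₂₂ : ℝ → ℝ)
    (hanti : Antitone g₁₁ ∧ Antitone g₁₂ ∧ Antitone g₂₁ ∧ Antitone g₂₂)
    (hrange : ∀ x ≥ (0:ℝ), (0 ≤ g₁₁ x ∧ g₁₁ x ≤ 1) ∧ (0 ≤ g₁₂ x ∧ g₁₂ x ≤ 1) ∧
      (0 ≤ g₂₁ x ∧ g₂₁ x ≤ 1) ∧ (0 ≤ g₂₂ x ∧ g₂₂ x ≤ 1))
    (v₁ v₂ : ℝ) (hv₁ : 0 ≤ v₁) (hv₂ : 0 ≤ v₂)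
    (l : ℕ → ℝ → ℝ)
    (hl1 : ∀ t, l 1 t = v₂ * Real.exp (-δ₂ * t))
    (hl2 : ∀ t, l 2 t = v₁ * Real.exp (-δ₁ * t))
    (hlodd : ∀ k ≥ 1, ∀ t, l (2 * k + 1) t =
      v₂ * Real.exp (-δ₂ * t) + Real.exp (-δ₂ * t) *
        ∫ s in (0:ℝ)..t, Real.exp (δ₂ * s) *
          ((1 - g₁₂ (l (2 * k) s)) + (1 - g₂₂ (l (2 * k - 1) s))))
    (hleven : ∀ k ≥ 1, ∀ t, l (2 * k + 2) t =
      v₁ * Real.exp (-δ₁ * t) + Real.exp (-δ₁ * t) *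
        ∫ s in (0:ℝ)..t, Real.exp (δ₁ * s) *
          ((1 - g₁₁ (l (2 * k) s)) + (1 - g₂₁ (l (2 * k - 1) s)))) :
    ∀ k ≥ 1, ∀ t ≥ (0:ℝ),
      l (2 * k - 1) t ≤ l (2 * k + 1) t ∧ l (2 * k) t ≤ l (2 * k + 2) t := by
  obtain ⟨ha₁₁, ha₁₂, ha₂₁, ha₂₂⟩ := hanti
  have hodd_index (n : ℕ) : 2 * (n + 1) - 1 = 2 * n + 1 := by omega
  have hsystem := duhamel_iteration_le_succ (δ₁ := δ₁) (δ₂ := δ₂) (a := fun n => l (2 * n + 1))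
    (b := fun n => l (2 * n + 2)) hv₁ hv₂
    ⟨ha₁₁, fun x hx => (hrange x hx).1⟩ ⟨ha₁₂, fun x hx => (hrange x hx).2.1⟩
    ⟨ha₂₁, fun x hx => (hrange x hx).2.2.1⟩ ⟨ha₂₂, fun x hx => (hrange x hx).2.2.2⟩
    (funext fun t => by simp [hl1]) (funext fun t => by simp [hl2])
    (fun n => funext fun t => by rw [← hodd_index n]; exact hlodd (n + 1) n.succ_pos t)
    (fun n => funext fun t => by rw [← hodd_index n]; exact hleven (n + 1) n.succ_pos t)
  intro k hk t ht
  obtain ⟨n, rfl⟩ : ∃ n, k = n + 1 := ⟨k - 1, by omega⟩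
  rw [hodd_index]
  exact (hsystem n).2.2 t ht

theorem stmt8 (δ₁ δ₂ : ℝ) (hδ₁ : 0 < δ₁) (hδ₂ : 0 < δ₂)
    (g₁₁ g₁₂ g₂₁ g₂₂ : ℝ → ℝ) (μ₁₁ μ₁₂ μ₂₁ μ₂₂ : ℝ)
    (hμ : 0 ≤ μ₁₁ ∧ 0 ≤ μ₁₂ ∧ 0 ≤ μ₂₁ ∧ 0 ≤ μ₂₂)
    (hanti : Antitone g₁₁ ∧ Antitone g₁₂ ∧ Antitone g₂₁ ∧ Antitone g₂₂)
    (hrange : ∀ x ≥ (0:ℝ), (0 ≤ g₁₁ x ∧ g₁₁ x ≤ 1) ∧ (0 ≤ g₁₂ x ∧ g₁₂ x ≤ 1) ∧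
      (0 ≤ g₂₁ x ∧ g₂₁ x ≤ 1) ∧ (0 ≤ g₂₂ x ∧ g₂₂ x ≤ 1))
    (hone : g₁₁ 0 = 1 ∧ g₁₂ 0 = 1 ∧ g₂₁ 0 = 1 ∧ g₂₂ 0 = 1)
    (hlip : ∀ x ≥ (0:ℝ), (1 - g₁₁ x ≤ μ₁₁ * x) ∧ (1 - g₁₂ x ≤ μ₁₂ * x) ∧
      (1 - g₂₁ x ≤ μ₂₁ * x) ∧ (1 - g₂₂ x ≤ μ₂₂ * x))
    (v₁ v₂ : ℝ) (hv₁ : 0 ≤ v₁) (hv₂ : 0 ≤ v₂)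
    (l : ℕ → ℝ → ℝ)
    (hl1 : ∀ t, l 1 t = v₂ * Real.exp (-δ₂ * t))
    (hl2 : ∀ t, l 2 t = v₁ * Real.exp (-δ₁ * t))
    (hlodd : ∀ k ≥ 1, ∀ t, l (2 * k + 1) t =
      v₂ * Real.exp (-δ₂ * t) + Real.exp (-δ₂ * t) *
        ∫ s in (0:ℝ)..t, Real.exp (δ₂ * s) *
          ((1 - g₁₂ (l (2 * k) s)) + (1 - g₂₂ (l (2 * k - 1) s))))
    (hleven : ∀ k ≥ 1, ∀ t, l (2 * k + 2) t =
      v₁ * Real.exp (-δ₁ * t) + Real.exp (-δ₁ * t) *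
        ∫ s in (0:ℝ)..t, Real.exp (δ₁ * s) *
          ((1 - g₁₁ (l (2 * k) s)) + (1 - g₂₁ (l (2 * k - 1) s)))) :
    ∀ k ≥ 1, ∀ t ≥ (0:ℝ),
      l (2 * k - 1) t ≤ l (2 * k + 1) t ∧ l (2 * k) t ≤ l (2 * k + 2) t :=
  stmt8_general δ₁ δ₂ g₁₁ g₁₂ g₂₁ g₂₂ hanti hrange v₁ v₂ hv₁ hv₂ l hl1 hl2 hlodd hleven
end

section
/- With the recursive functions l_k as defined from decreasing Laplace-transform-type functions g_{ij} satisfying 1 - g_{ij}(x) ≤ μ_{ij} x, define the increments d⁽¹⁾₁(t) = l₁(t), d⁽²⁾₁(t) = l₂(t), and for k ≥ 2, d⁽¹⁾_k(t) = l_{2k-1}(t) - l_{2k-3}(t), d⁽²⁾_k(t) = l_{2k}(t) - l_{2k-2}(t) (assuming constant initial values so these are nonnegative). Then d⁽¹⁾_{k+1}(t) ≤ e^{-δ₂ t} ∫₀ᵗ e^{δ₂ s}[μ₂₂ d⁽¹⁾_k(s) + μ₁₂ d⁽²⁾_k(s)] ds and d⁽²⁾_{k+1}(t) ≤ e^{-δ₁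 t} ∫₀ᵗ e^{δ₁ s}[μ₂₁ d⁽¹⁾_k(s) + μ₁₁ d⁽²⁾_k(s)] ds. -/
/-!
Put `u n = l (2n-1)`, `w n = l (2n)` for `n ≥ 1` and `u 0 = w 0 = 0`. Since `g_{ij}(0) = 1`, the
zero pair has zero forcing, so `(u, w)` is a single Duhamel iteration starting at `n = 0`, and the
increments `d_k` become `u k - u (k-1)`, `w k - w (k-1)` without a special case at `k = 1`.
Subtracting two consecutive Duhamel formulas, the one-sided Lipschitz bound
`g x - g y ≤ μ (y - x)` applies under the integral because the iterates are nonnegative and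
increasing in `n`. The iterates are continuous (an antitone function of a continuous one is
measurable and locally bounded), so all the interval integrals are genuine.
-/

open MeasureTheory Set intervalIntegral Real
open scoped Interval

theorem Antitone.intervalIntegrable_comp {g p : ℝ → ℝ} {a b : ℝ} (hg : Antitone g)
    (hp : ContinuousOn p [[a, b]]) : IntervalIntegrable (fun s => g (p s)) volume a b := by
  obtain ⟨m, hm⟩ := (isCompact_uIcc.image_of_continuousOn hp).bddBelow
  obtain ⟨M, hM⟩ := (isCompact_uIcc.image_of_continuousOn hp).bddAbove
  rw [intervalIntegrable_iff']
  refine IntegrableOn.of_bound isCompact_uIcc.measure_lt_top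
    (hg.measurable.comp_aemeasurable (hp.aemeasurable measurableSet_uIcc)).aestronglyMeasurable
    (max |g M| |g m|) ((ae_restrict_iff' measurableSet_uIcc).2 (ae_of_all _ fun s hs => ?_))
  have hps : p s ∈ p '' [[a, b]] := mem_image_of_mem p hs
  exact abs_le_max_abs_abs (hg (hM hps)) (hg (hm hps))

section Duhamel

variable {gA gB p q : ℝ → ℝ}

theorem intervalIntegrable_exp_mul_one_sub_add_one_sub (δ : ℝ) (hgA : Antitone gA)
    (hgB : Antitone gB) (hp : Continuous p) (hq : Continuous q) (a b : ℝ) :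
    IntervalIntegrable (fun s => exp (δ * s) * ((1 - gA (p s)) + (1 - gB (q s)))) volume a b :=
  ((intervalIntegrable_const.sub (hgA.intervalIntegrable_comp hp.continuousOn)).add
    (intervalIntegrable_const.sub (hgB.intervalIntegrable_comp hq.continuousOn))).continuousOn_mul
    (by fun_prop)

theorem continuous_duhamel (v δ : ℝ) (hgA : Antitone gA) (hgB : Antitone gB)
    (hp : Continuous p) (hq : Continuous q) :
    Continuous fun t => v * exp (-δ * t) + exp (-δ * t) *
      ∫ s in (0:ℝ)..t, exp (δ * s) * ((1 - gA (p s)) + (1 - gB (q s))) := by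
  have := continuous_primitive (intervalIntegrable_exp_mul_one_sub_add_one_sub δ hgA hgB hp hq) 0
  fun_prop

theorem duhamel_sub_duhamel_le {p' q' : ℝ → ℝ} {v δ μA μB t : ℝ}
    (hgA : Antitone gA) (hgB : Antitone gB)
    (hlipA : ∀ x y : ℝ, 0 ≤ x → x ≤ y → gA x - gA y ≤ μA * (y - x))
    (hlipB : ∀ x y : ℝ, 0 ≤ x → x ≤ y → gB x - gB y ≤ μB * (y - x))
    (hp : Continuous p) (hq : Continuous q) (hp' : Continuous p') (hq' : Continuous q')
    (ht : 0 ≤ t) (hord : ∀ s ∈ Icc 0 t, 0 ≤ p' s ∧ p' s ≤ p s ∧ 0 ≤ q' s ∧ q' s ≤ q s) :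
    (v * exp (-δ * t) + exp (-δ * t) *
        ∫ s in (0:ℝ)..t, exp (δ * s) * ((1 - gA (p s)) + (1 - gB (q s)))) -
      (v * exp (-δ * t) + exp (-δ * t) *
        ∫ s in (0:ℝ)..t, exp (δ * s) * ((1 - gA (p' s)) + (1 - gB (q' s)))) ≤
    exp (-δ * t) * ∫ s in (0:ℝ)..t, exp (δ * s) * (μB * (q s - q' s) + μA * (p s - p' s)) := by
  have hF := intervalIntegrable_exp_mul_one_sub_add_one_sub δ hgA hgB hp hq 0 t
  have hF' := intervalIntegrable_exp_mul_one_sub_add_one_sub δ hgA hgB hp' hq' 0 t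
  rw [add_sub_add_left_eq_sub, ← mul_sub, ← integral_sub hF hF']
  gcongr
  refine integral_mono_on ht (hF.sub hF') (Continuous.intervalIntegrable (by fun_prop) _ _)
    fun s hs => ?_
  obtain ⟨hp's, hps, hq's, hqs⟩ := hord s hs
  rw [← mul_sub]
  gcongr
  linarith [hlipA _ _ hp's hps, hlipB _ _ hq's hqs]

end Duhamel

section CoupledIteration

variable {δ₁ δ₂ v₁ v₂ : ℝ} {g₁₁ g₁₂ g₂₁ g₂₂ : ℝ → ℝ} {u w : ℕ → ℝ → ℝ}

theorem continuous_coupled_duhamel_iterates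
    (h₁₁ : Antitone g₁₁) (h₁₂ : Antitone g₁₂) (h₂₁ : Antitone g₂₁) (h₂₂ : Antitone g₂₂)
    (hu₀ : Continuous (u 0)) (hw₀ : Continuous (w 0))
    (hu : ∀ n t, u (n + 1) t = v₂ * exp (-δ₂ * t) + exp (-δ₂ * t) *
      ∫ s in (0:ℝ)..t, exp (δ₂ * s) * ((1 - g₁₂ (w n s)) + (1 - g₂₂ (u n s))))
    (hw : ∀ n t, w (n + 1) t = v₁ * exp (-δ₁ * t) + exp (-δ₁ * t) *
      ∫ s in (0:ℝ)..t, exp (δ₁ * s) * ((1 - g₁₁ (w n s)) + (1 - g₂₁ (u n s)))) :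
    ∀ n, Continuous (u n) ∧ Continuous (w n)
  | 0 => ⟨hu₀, hw₀⟩
  | n + 1 =>
    have ⟨hun, hwn⟩ := continuous_coupled_duhamel_iterates h₁₁ h₁₂ h₂₁ h₂₂ hu₀ hw₀ hu hw n
    ⟨(continuous_duhamel v₂ δ₂ h₁₂ h₂₂ hwn hun).congr fun t => (hu n t).symm,
      (continuous_duhamel v₁ δ₁ h₁₁ h₂₁ hwn hun).congr fun t => (hw n t).symm⟩

theorem coupled_duhamel_increment_le {μ₁₁ μ₁₂ μ₂₁ μ₂₂ : ℝ}
    (h₁₁ : Antitone g₁₁) (h₁₂ : Antitone g₁₂) (h₂₁ : Antitone g₂₁) (h₂₂ : Antitone g₂₂)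
    (hlip₁₁ : ∀ x y : ℝ, 0 ≤ x → x ≤ y → g₁₁ x - g₁₁ y ≤ μ₁₁ * (y - x))
    (hlip₁₂ : ∀ x y : ℝ, 0 ≤ x → x ≤ y → g₁₂ x - g₁₂ y ≤ μ₁₂ * (y - x))
    (hlip₂₁ : ∀ x y : ℝ, 0 ≤ x → x ≤ y → g₂₁ x - g₂₁ y ≤ μ₂₁ * (y - x))
    (hlip₂₂ : ∀ x y : ℝ, 0 ≤ x → x ≤ y → g₂₂ x - g₂₂ y ≤ μ₂₂ * (y - x))
    (hu₀ : Continuous (u 0)) (hw₀ : Continuous (w 0))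
    (hu : ∀ n t, u (n + 1) t = v₂ * exp (-δ₂ * t) + exp (-δ₂ * t) *
      ∫ s in (0:ℝ)..t, exp (δ₂ * s) * ((1 - g₁₂ (w n s)) + (1 - g₂₂ (u n s))))
    (hw : ∀ n t, w (n + 1) t = v₁ * exp (-δ₁ * t) + exp (-δ₁ * t) *
      ∫ s in (0:ℝ)..t, exp (δ₁ * s) * ((1 - g₁₁ (w n s)) + (1 - g₂₁ (u n s))))
    (hord : ∀ n, ∀ s ≥ (0:ℝ), 0 ≤ w n s ∧ w n s ≤ w (n + 1) s ∧ 0 ≤ u n s ∧ u n s ≤ u (n + 1) s)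
    (n : ℕ) {t : ℝ} (ht : 0 ≤ t) :
    u (n + 2) t - u (n + 1) t ≤ exp (-δ₂ * t) * ∫ s in (0:ℝ)..t,
        exp (δ₂ * s) * (μ₂₂ * (u (n + 1) s - u n s) + μ₁₂ * (w (n + 1) s - w n s)) ∧
      w (n + 2) t - w (n + 1) t ≤ exp (-δ₁ * t) * ∫ s in (0:ℝ)..t,
        exp (δ₁ * s) * (μ₂₁ * (u (n + 1) s - u n s) + μ₁₁ * (w (n + 1) s - w n s)) := by
  have hcont := continuous_coupled_duhamel_iterates h₁₁ h₁₂ h₂₁ h₂₂ hu₀ hw₀ hu hw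
  obtain ⟨hun, hwn⟩ := hcont n
  obtain ⟨hun', hwn'⟩ := hcont (n + 1)
  have hordn : ∀ s ∈ Icc 0 t,
      0 ≤ w n s ∧ w n s ≤ w (n + 1) s ∧ 0 ≤ u n s ∧ u n s ≤ u (n + 1) s :=
    fun s hs => hord n s hs.1
  rw [hu (n + 1), hu n, hw (n + 1), hw n]
  exact ⟨duhamel_sub_duhamel_le h₁₂ h₂₂ hlip₁₂ hlip₂₂ hwn' hun' hwn hun ht hordn,
    duhamel_sub_duhamel_le h₁₁ h₂₁ hlip₁₁ hlip₂₁ hwn' hun' hwn hun ht hordn⟩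

end CoupledIteration

theorem stmt9_general (δ₁ δ₂ : ℝ)
    (g₁₁ g₁₂ g₂₁ g₂₂ : ℝ → ℝ) (μ₁₁ μ₁₂ μ₂₁ μ₂₂ : ℝ)
    (hanti : Antitone g₁₁ ∧ Antitone g₁₂ ∧ Antitone g₂₁ ∧ Antitone g₂₂)
    (hone : g₁₁ 0 = 1 ∧ g₁₂ 0 = 1 ∧ g₂₁ 0 = 1 ∧ g₂₂ 0 = 1)
    (hlip : ∀ x y : ℝ, 0 ≤ x → x ≤ y →
      (g₁₁ x - g₁₁ y ≤ μ₁₁ * (y - x)) ∧ (g₁₂ x - g₁₂ y ≤ μ₁₂ * (y - x)) ∧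
      (g₂₁ x - g₂₁ y ≤ μ₂₁ * (y - x)) ∧ (g₂₂ x - g₂₂ y ≤ μ₂₂ * (y - x)))
    (v₁ v₂ : ℝ)
    (l : ℕ → ℝ → ℝ)
    (hl1 : ∀ t, l 1 t = v₂ * Real.exp (-δ₂ * t))
    (hl2 : ∀ t, l 2 t = v₁ * Real.exp (-δ₁ * t))
    (hlodd : ∀ k ≥ 1, ∀ t, l (2 * k + 1) t =
      v₂ * Real.exp (-δ₂ * t) + Real.exp (-δ₂ * t) *
        ∫ s in (0:ℝ)..t, Real.exp (δ₂ * s) *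
          ((1 - g₁₂ (l (2 * k) s)) + (1 - g₂₂ (l (2 * k - 1) s))))
    (hleven : ∀ k ≥ 1, ∀ t, l (2 * k + 2) t =
      v₁ * Real.exp (-δ₁ * t) + Real.exp (-δ₁ * t) *
        ∫ s in (0:ℝ)..t, Real.exp (δ₁ * s) *
          ((1 - g₁₁ (l (2 * k) s)) + (1 - g₂₁ (l (2 * k - 1) s))))
    (hmono : ∀ k ≥ 1, ∀ t ≥ (0:ℝ),
      0 ≤ l (2 * k - 1) t ∧ l (2 * k - 1) t ≤ l (2 * k + 1) t ∧
      0 ≤ l (2 * k) t ∧ l (2 * k) t ≤ l (2 * k + 2) t)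
    (d₁ d₂ : ℕ → ℝ → ℝ)
    (hd₁1 : ∀ t, d₁ 1 t = l 1 t) (hd₂1 : ∀ t, d₂ 1 t = l 2 t)
    (hd₁ : ∀ k ≥ 2, ∀ t, d₁ k t = l (2 * k - 1) t - l (2 * k - 3) t)
    (hd₂ : ∀ k ≥ 2, ∀ t, d₂ k t = l (2 * k) t - l (2 * k - 2) t) :
    ∀ k ≥ 1, ∀ t ≥ (0:ℝ),
      d₁ (k + 1) t ≤ Real.exp (-δ₂ * t) *
        ∫ s in (0:ℝ)..t, Real.exp (δ₂ * s) * (μ₂₂ * d₁ k s + μ₁₂ * d₂ k s) ∧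
      d₂ (k + 1) t ≤ Real.exp (-δ₁ * t) *
        ∫ s in (0:ℝ)..t, Real.exp (δ₁ * s) * (μ₂₁ * d₁ k s + μ₁₁ * d₂ k s) := by
  obtain ⟨h₁₁, h₁₂, h₂₁, h₂₂⟩ := hanti
  obtain ⟨g₁₁0, g₁₂0, g₂₁0, g₂₂0⟩ := hone
  let u : ℕ → ℝ → ℝ := fun | 0 => 0 | n + 1 => l (2 * n + 1)
  let w : ℕ → ℝ → ℝ := fun | 0 => 0 | n + 1 => l (2 * n + 2)
  have hu : ∀ n t, u (n + 1) t = v₂ * exp (-δ₂ * t) + exp (-δ₂ * t) *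
      ∫ s in (0:ℝ)..t, exp (δ₂ * s) * ((1 - g₁₂ (w n s)) + (1 - g₂₂ (u n s))) := by
    rintro (_ | n) t
    · simp [u, w, hl1, g₁₂0, g₂₂0]
    · exact hlodd (n + 1) (by omega) t
  have hw : ∀ n t, w (n + 1) t = v₁ * exp (-δ₁ * t) + exp (-δ₁ * t) *
      ∫ s in (0:ℝ)..t, exp (δ₁ * s) * ((1 - g₁₁ (w n s)) + (1 - g₂₁ (u n s))) := by
    rintro (_ | n) t
    · simp [u, w, hl2, g₁₁0, g₂₁0]
    · exact hleven (n + 1) (by omega) t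
  have hord : ∀ n, ∀ s ≥ (0:ℝ),
      0 ≤ w n s ∧ w n s ≤ w (n + 1) s ∧ 0 ≤ u n s ∧ u n s ≤ u (n + 1) s := by
    rintro (_ | n) s hs
    · obtain ⟨h₁, -, h₂, -⟩ := hmono 1 le_rfl s hs
      exact ⟨le_rfl, h₂, le_rfl, h₁⟩
    · obtain ⟨h₁, h₂, h₃, h₄⟩ := hmono (n + 1) (by omega) s hs
      exact ⟨h₃, h₄, h₁, h₂⟩
  have hd : ∀ n t, d₁ (n + 1) t = u (n + 1) t - u n t ∧ d₂ (n + 1) t = w (n + 1) t - w n t := by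
    rintro (_ | n) t
    · simp [u, w, hd₁1, hd₂1]
    · exact ⟨hd₁ (n + 2) (by omega) t, hd₂ (n + 2) (by omega) t⟩
  rintro (_ | k) hk t ht
  · omega
  simp only [hd]
  exact coupled_duhamel_increment_le h₁₁ h₁₂ h₂₁ h₂₂ (fun x y hx hxy => (hlip x y hx hxy).1)
    (fun x y hx hxy => (hlip x y hx hxy).2.1) (fun x y hx hxy => (hlip x y hx hxy).2.2.1)
    (fun x y hx hxy => (hlip x y hx hxy).2.2.2) continuous_const continuous_const hu hw hord k ht

theorem stmt9 (δ₁ δ₂ : ℝ) (hδ₁ : 0 < δ₁) (hδ₂ : 0 < δ₂)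
    (g₁₁ g₁₂ g₂₁ g₂₂ : ℝ → ℝ) (μ₁₁ μ₁₂ μ₂₁ μ₂₂ : ℝ)
    (hμ : 0 ≤ μ₁₁ ∧ 0 ≤ μ₁₂ ∧ 0 ≤ μ₂₁ ∧ 0 ≤ μ₂₂)
    (hanti : Antitone g₁₁ ∧ Antitone g₁₂ ∧ Antitone g₂₁ ∧ Antitone g₂₂)
    (hrange : ∀ x ≥ (0:ℝ), (0 ≤ g₁₁ x ∧ g₁₁ x ≤ 1) ∧ (0 ≤ g₁₂ x ∧ g₁₂ x ≤ 1) ∧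
      (0 ≤ g₂₁ x ∧ g₂₁ x ≤ 1) ∧ (0 ≤ g₂₂ x ∧ g₂₂ x ≤ 1))
    (hone : g₁₁ 0 = 1 ∧ g₁₂ 0 = 1 ∧ g₂₁ 0 = 1 ∧ g₂₂ 0 = 1)
    (hlip : ∀ x y : ℝ, 0 ≤ x → x ≤ y →
      (g₁₁ x - g₁₁ y ≤ μ₁₁ * (y - x)) ∧ (g₁₂ x - g₁₂ y ≤ μ₁₂ * (y - x)) ∧
      (g₂₁ x - g₂₁ y ≤ μ₂₁ * (y - x)) ∧ (g₂₂ x - g₂₂ y ≤ μ₂₂ * (y - x)))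
    (v₁ v₂ : ℝ) (hv₁ : 0 ≤ v₁) (hv₂ : 0 ≤ v₂)
    (l : ℕ → ℝ → ℝ)
    (hl1 : ∀ t, l 1 t = v₂ * Real.exp (-δ₂ * t))
    (hl2 : ∀ t, l 2 t = v₁ * Real.exp (-δ₁ * t))
    (hlodd : ∀ k ≥ 1, ∀ t, l (2 * k + 1) t =
      v₂ * Real.exp (-δ₂ * t) + Real.exp (-δ₂ * t) *
        ∫ s in (0:ℝ)..t, Real.exp (δ₂ * s) *
          ((1 - g₁₂ (l (2 * k) s)) + (1 - g₂₂ (l (2 * k - 1) s))))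
    (hleven : ∀ k ≥ 1, ∀ t, l (2 * k + 2) t =
      v₁ * Real.exp (-δ₁ * t) + Real.exp (-δ₁ * t) *
        ∫ s in (0:ℝ)..t, Real.exp (δ₁ * s) *
          ((1 - g₁₁ (l (2 * k) s)) + (1 - g₂₁ (l (2 * k - 1) s))))
    (hmono : ∀ k ≥ 1, ∀ t ≥ (0:ℝ),
      0 ≤ l (2 * k - 1) t ∧ l (2 * k - 1) t ≤ l (2 * k + 1) t ∧
      0 ≤ l (2 * k) t ∧ l (2 * k) t ≤ l (2 * k + 2) t)
    (d₁ d₂ : ℕ → ℝ → ℝ)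
    (hd₁1 : ∀ t, d₁ 1 t = l 1 t) (hd₂1 : ∀ t, d₂ 1 t = l 2 t)
    (hd₁ : ∀ k ≥ 2, ∀ t, d₁ k t = l (2 * k - 1) t - l (2 * k - 3) t)
    (hd₂ : ∀ k ≥ 2, ∀ t, d₂ k t = l (2 * k) t - l (2 * k - 2) t) :
    ∀ k ≥ 1, ∀ t ≥ (0:ℝ),
      d₁ (k + 1) t ≤ Real.exp (-δ₂ * t) *
        ∫ s in (0:ℝ)..t, Real.exp (δ₂ * s) * (μ₂₂ * d₁ k s + μ₁₂ * d₂ k s) ∧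
      d₂ (k + 1) t ≤ Real.exp (-δ₁ * t) *
        ∫ s in (0:ℝ)..t, Real.exp (δ₁ * s) * (μ₂₁ * d₁ k s + μ₁₁ * d₂ k s) :=
  stmt9_general δ₁ δ₂ g₁₁ g₁₂ g₂₁ g₂₂ μ₁₁ μ₁₂ μ₂₁ μ₂₂ hanti hone hlip v₁ v₂ l hl1 hl2 hlodd hleven
    hmono d₁ d₂ hd₁1 hd₂1 hd₁ hd₂
end
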